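/- Let x* ∈ X. Suppose that for every continuously differentiable function φ : ℝⁿ → ℝ the following implication holds: if x* is AS-stationary with respect to φ, then x* is S-stationary with respect to φ. Then x* is AS-regular. -/

import Mathlib

open Filter Topology

noncomputable section

/-- Euclidean n-space. -/
abbrev E (n : ℕ) : Type := EuclideanSpace ℝ (Fin n)

/-- The SP-Lagrangian L(x, λ, μ) = φ(x) + λᵀg(x) + μᵀh(x). -/
def LSP {n m q : ℕ} (f : E n → ℝ) (g : Fin m → E n → ℝ) (h : Fin q → E n → ℝ)
    (lam : Fin m → ℝ) (mu : Fin q → ℝ) (x : E n) : ℝ :=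
  f x + (∑ i, lam i * g i x) + (∑ j, mu j * h j x)

/-- S-stationarity of x* with respect to the objective `f`. -/
def SStat {n m q : ℕ} (f : E n → ℝ) (g : Fin m → E n → ℝ) (h : Fin q → E n → ℝ)
    (xstar : E n) : Prop :=
  ∃ (lam : Fin m → ℝ) (mu : Fin q → ℝ),
    (∀ i, 0 ≤ lam i) ∧ (∀ i, lam i * g i xstar = 0) ∧
    ∀ i, xstar i ≠ 0 → gradient (LSP f g h lam mu) xstar i = 0

/-- AS-stationarity of x* with respect to the objective `f`. -/
def ASStat {n m q : ℕ} (f : E n → ℝ) (g : Fin m → E n → ℝ) (h : Fin q → E n → ℝ)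
    (xstar : E n) : Prop :=
  ∃ (xk : ℕ → E n) (lamk : ℕ → Fin m → ℝ) (muk : ℕ → Fin q → ℝ),
    Tendsto xk atTop (𝓝 xstar) ∧
    (∀ k i, 0 ≤ lamk k i) ∧
    (∀ i, xstar i ≠ 0 →
      Tendsto (fun k => gradient (LSP f g h (lamk k) (muk k)) (xk k) i) atTop (𝓝 0)) ∧
    (∀ i, Tendsto (fun k => min (-(g i (xk k))) (lamk k i)) atTop (𝓝 0))

/-- The cone K(x) (relative to the fixed point x*). -/
def Kcone {n m q : ℕ} (g : Fin m → E n → ℝ) (h : Fin q → E n → ℝ)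
    (xstar : E n) (x : E n) : Set (E n) :=
  {d | ∃ (mu : Fin q → ℝ) (lam : Fin m → ℝ),
    (∀ i, 0 ≤ lam i) ∧ (∀ i, g i xstar ≠ 0 → lam i = 0) ∧
    ∀ j, xstar j ≠ 0 →
      d j = (∑ i, mu i * gradient (h i) x j) + ∑ i, lam i * gradient (g i) x j}

/-- AS-regularity: outer semicontinuity of K(·) at x*. -/
def ASRegular {n m q : ℕ} (g : Fin m → E n → ℝ) (h : Fin q → E n → ℝ)
    (xstar : E n) : Prop :=
  ∀ (xk dk : ℕ → E n) (d : E n),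
    Tendsto xk atTop (𝓝 xstar) → Tendsto dk atTop (𝓝 d) →
    (∀ k, dk k ∈ Kcone g h xstar (xk k)) → d ∈ Kcone g h xstar xstar

/-!
Given `xᵏ → x*` and `dᵏ → d` with `dᵏ ∈ K(xᵏ)`, take the linear objective `φ(y) = ⟪-d, y⟫`.
The multipliers certifying `dᵏ ∈ K(xᵏ)` make `x*` AS-stationary for `φ`: the components of
`∇ₓL_φ(xᵏ)` off `I₀(x*)` are `dᵏⱼ - dⱼ → 0`, and the multipliers of constraints inactive at `x*`
vanish. The S-multipliers at `x*` then exhibit `d ∈ K(x*)`.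
-/

theorem gradient_apply_eq_fderiv {n : ℕ} (f : E n → ℝ) (x : E n) (j : Fin n) :
    gradient f x j = fderiv ℝ f x (EuclideanSpace.single j 1) := by
  rw [gradient, ← InnerProductSpace.toDual_symm_apply, EuclideanSpace.inner_single_right]
  simp

open InnerProductSpace in
theorem hasGradientAt_inner_left {F : Type*} [NormedAddCommGroup F] [InnerProductSpace ℝ F]
    [CompleteSpace F] (v x : F) : HasGradientAt (fun y => inner ℝ v y) v x :=
  hasGradientAt_iff_hasFDerivAt.mpr (toDual ℝ F v).hasFDerivAt

theorem tendsto_min_neg_of_complementary {α : Type*} {l : Filter α} {u v : α → ℝ} {c : ℝ}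
    (hu : Tendsto u l (𝓝 c)) (hc : c ≤ 0) (hv : ∀ a, 0 ≤ v a) (hvc : c ≠ 0 → ∀ a, v a = 0) :
    Tendsto (fun a => min (-u a) (v a)) l (𝓝 0) := by
  have hlow : Tendsto (fun a => min (-u a) 0) l (𝓝 0) := by
    simpa [min_eq_right (neg_nonneg.2 hc)] using hu.neg.min (tendsto_const_nhds (x := (0 : ℝ)))
  rcases eq_or_ne c 0 with rfl | hc0
  · exact tendsto_of_tendsto_of_tendsto_of_le_of_le hlow (by simpa using hu.neg)
      (fun a => min_le_min_left _ (hv a)) (fun a => min_le_left _ _)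
  · simpa [hvc hc0] using hlow

section Lagrangian

variable {n m q : ℕ} {g : Fin m → E n → ℝ} {h : Fin q → E n → ℝ}

theorem gradient_LSP_apply {f : E n → ℝ} {x : E n} (hf : DifferentiableAt ℝ f x)
    (hg : ∀ i, DifferentiableAt ℝ (g i) x) (hh : ∀ i, DifferentiableAt ℝ (h i) x)
    (lam : Fin m → ℝ) (mu : Fin q → ℝ) (j : Fin n) :
    gradient (LSP f g h lam mu) x j = gradient f x j
      + (∑ i, lam i * gradient (g i) x j) + ∑ i, mu i * gradient (h i) x j := by
  unfold LSP
  simp only [gradient_apply_eq_fderiv]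
  rw [fderiv_fun_add (by fun_prop) (by fun_prop), fderiv_fun_add (by fun_prop) (by fun_prop),
    fderiv_fun_sum (fun i _ => by fun_prop), fderiv_fun_sum (fun i _ => by fun_prop)]
  simp [fderiv_const_mul, hg, hh]

theorem gradient_LSP_inner_neg_apply {x : E n} (hg : ∀ i, DifferentiableAt ℝ (g i) x)
    (hh : ∀ i, DifferentiableAt ℝ (h i) x) (d : E n) (lam : Fin m → ℝ) (mu : Fin q → ℝ)
    (j : Fin n) :
    gradient (LSP (fun y => inner ℝ (-d) y) g h lam mu) x j
      = (∑ i, mu i * gradient (h i) x j) + (∑ i, lam i * gradient (g i) x j) - d j := by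
  have hd := hasGradientAt_inner_left (-d) x
  rw [gradient_LSP_apply hd.differentiableAt hg hh, hd.gradient, PiLp.neg_apply]
  ring

theorem asStat_inner_neg_of_tendsto_mem_Kcone {xstar d : E n} {xk dk : ℕ → E n}
    (hg : ∀ i, Differentiable ℝ (g i)) (hh : ∀ i, Differentiable ℝ (h i))
    (hgx : ∀ i, g i xstar ≤ 0) (hxk : Tendsto xk atTop (𝓝 xstar))
    (hdk : Tendsto dk atTop (𝓝 d)) (hmem : ∀ k, dk k ∈ Kcone g h xstar (xk k)) :
    ASStat (fun y => inner ℝ (-d) y) g h xstar := by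
  choose muk lamk hlam hlam_supp hdk_eq using hmem
  refine ⟨xk, lamk, muk, hxk, hlam, fun j hj => ?_, fun i => ?_⟩
  · have hcoord : Tendsto (fun k => dk k j - d j) atTop (𝓝 0) := by
      simpa using ((PiLp.continuous_apply 2 _ j).tendsto d |>.comp hdk).sub_const (d j)
    refine hcoord.congr fun k => ?_
    rw [gradient_LSP_inner_neg_apply (fun i => (hg i).differentiableAt)
      (fun i => (hh i).differentiableAt), hdk_eq k j hj]
  · exact tendsto_min_neg_of_complementary (((hg i).continuous.tendsto xstar).comp hxk)
      (hgx i) (fun k => hlam k i) (fun hi k => hlam_supp k i hi)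

theorem mem_Kcone_of_sStat_inner_neg {xstar d : E n}
    (hg : ∀ i, DifferentiableAt ℝ (g i) xstar) (hh : ∀ i, DifferentiableAt ℝ (h i) xstar)
    (hS : SStat (fun y => inner ℝ (-d) y) g h xstar) : d ∈ Kcone g h xstar xstar := by
  obtain ⟨lam, mu, hlam, hcompl, hstat⟩ := hS
  refine ⟨mu, lam, hlam, fun i hi => (mul_eq_zero.mp (hcompl i)).resolve_right hi,
    fun j hj => ?_⟩
  have := hstat j hj
  rw [gradient_LSP_inner_neg_apply hg hh] at this
  linarith

end Lagrangian

theorem stmt_11_general {n m q : ℕ}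
    (g : Fin m → E n → ℝ) (h : Fin q → E n → ℝ)
    (hg : ∀ i, ContDiff ℝ 1 (g i)) (hh : ∀ j, ContDiff ℝ 1 (h j))
    (xstar : E n)
    -- x* ∈ X :
    (hgx : ∀ i, g i xstar ≤ 0)
    (himp : ∀ φ : E n → ℝ, ContDiff ℝ 1 φ →
      ASStat φ g h xstar → SStat φ g h xstar) :
    ASRegular g h xstar := by
  intro xk dk d hxk hdk hmem
  have hg' i : Differentiable ℝ (g i) := (hg i).differentiable one_ne_zero
  have hh' j : Differentiable ℝ (h j) := (hh j).differentiable one_ne_zero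
  exact mem_Kcone_of_sStat_inner_neg (fun i => (hg' i).differentiableAt)
    (fun j => (hh' j).differentiableAt)
    (himp _ (contDiff_const.inner ℝ contDiff_id)
      (asStat_inner_neg_of_tendsto_mem_Kcone hg' hh' hgx hxk hdk hmem))

/-- if, for every continuously differentiable objective φ,
AS-stationarity of x* w.r.t. φ implies S-stationarity of x* w.r.t. φ, then
x* is AS-regular. -/
theorem stmt_11 {n m q : ℕ} (hn : 1 ≤ n)
    (g : Fin m → E n → ℝ) (h : Fin q → E n → ℝ)
    (hg : ∀ i, ContDiff ℝ 1 (g i)) (hh : ∀ j, ContDiff ℝ 1 (h j))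
    (xstar : E n)
    -- x* ∈ X :
    (hgx : ∀ i, g i xstar ≤ 0) (hhx : ∀ j, h j xstar = 0) (hxnn : ∀ i, 0 ≤ xstar i)
    (himp : ∀ φ : E n → ℝ, ContDiff ℝ 1 φ →
      ASStat φ g h xstar → SStat φ g h xstar) :
    ASRegular g h xstar :=
  stmt_11_general g h hg hh xstar hgx himp
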